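/- The wedge-annihilation filtration determined by any subspace of 1-cochains is stable under the Chevalley–Eilenberg differential: for any subspace W ⊆ g* and all integers p, n, d(F̃^pC^n(g)) ⊆ F̃^pC^{n+1}(g), where F̃^pC^n(g) = {ω ∈ C^n(g) : θ₁ ∧ ⋯ ∧ θ_{n+1−p} ∧ ω = 0 for all θ₁,…,θ_{n+1−p} ∈ W}. -/

import Mathlib

/-!
STATEMENT 7: The wedge-annihilation filtration determined by any subspace `W ⊆ g*` of
1-cochains is stable under the Chevalley–Eilenberg differential (trivial coefficients):
for all integers `p` and all `n`, `d(F̃^pC^n(g)) ⊆ F̃^pC^{n+1}(g)`, where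
`F̃^pC^n(g) = {ω ∈ C^n(g) : θ₁ ∧ ⋯ ∧ θ_{n+1−p} ∧ ω = 0 for all θ₁,…,θ_{n+1−p} ∈ W}`
(and `F̃^pC^n = 0` when `n+1−p < 0`).

Wedging a 1-form `θ` with an `n`-cochain `ω` is given by
`(θ ∧ ω)(X₀,…,X_n) = Σ_i (−1)^i θ(X_i) ω(X₀,…,X̂_i,…,X_n)`.
-/

open Finset

/-- The trivial-coefficient Chevalley–Eilenberg differential, at the level of functions. -/
def ceD0 {K : Type*} [Field K] {g : Type*} [LieRing g] [LieAlgebra K g] :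
    ∀ n : ℕ, ((Fin n → g) → K) → ((Fin (n + 1) → g) → K)
  | 0 => fun _ _ => 0
  | (m + 1) => fun ω X =>
      ∑ i : Fin (m + 2), ∑ j : Fin (m + 1),
        if (i : ℕ) ≤ (j : ℕ) then
          ((-1 : ℤ) ^ ((i : ℕ) + ((i.succAbove j : Fin (m + 2)) : ℕ))) •
            ω (Fin.cons ⁅X i, X (i.succAbove j)⁆ ((X ∘ i.succAbove) ∘ j.succAbove))
        else 0

/-- The wedge product of a 1-form with an `n`-cochain. -/
def wedge1 {K : Type*} [Field K] {g : Type*} [AddCommGroup g] [Module K g]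
    (θ : Module.Dual K g) {n : ℕ} (ω : (Fin n → g) → K) : (Fin (n + 1) → g) → K :=
  fun X => ∑ i : Fin (n + 1), ((-1 : K) ^ (i : ℕ)) * θ (X i) * ω (X ∘ i.succAbove)

/-- The iterated wedge product `θ₁ ∧ ⋯ ∧ θ_c ∧ ω` of a family of 1-forms with an
`n`-cochain. -/
def wedgeIter {K : Type*} [Field K] {g : Type*} [AddCommGroup g] [Module K g] :
    ∀ (c : ℕ), (Fin c → Module.Dual K g) → ∀ {n : ℕ},
      ((Fin n → g) → K) → ((Fin (n + c) → g) → K)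
  | 0, _, _, ω => ω
  | (c + 1), θ, _, ω => wedge1 (θ 0) (wedgeIter c (θ ∘ Fin.succ) ω)

/-- The wedge-annihilation filtration determined by a subspace `W ⊆ g*`:
`F̃^pC^n(g)` consists of the `n`-cochains killed by wedging with any `n+1−p`
elements of `W`. -/
def wFilt {K : Type*} [Field K] {g : Type*} [LieRing g] [LieAlgebra K g]
    (W : Submodule K (Module.Dual K g)) (p : ℤ) (n : ℕ) : Set ((Fin n → g) → K) :=
  if (n : ℤ) + 1 - p < 0 then {0}
  else {ω | ∀ m : ℕ, (m : ℤ) = (n : ℤ) + 1 - p →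
    ∀ θ : Fin m → Module.Dual K g, (∀ i, θ i ∈ W) → wedgeIter m θ ω = 0}

/-!
Wedging with a 1-form `θ` almost commutes with `d`: by the Leibniz rule,
`θ ∧ dψ = dθ ∧ ψ - d(θ ∧ ψ)` with `dθ(x, y) = -θ⁅x, y⁆`, and wedging with `θ` commutes with
wedging with the 2-form `dθ`. Iterating, `θ₀ ∧ ⋯ ∧ θ_m ∧ dω` is `±d(θ₀ ∧ ⋯ ∧ θ_m ∧ ω)` plus a
signed sum of the terms `dθ_i ∧ (θ₀ ∧ ⋯ θ̂_i ⋯ ∧ θ_m ∧ ω)`. If every `m`-fold wedge of elements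
of `W` kills `ω`, each of these terms vanishes.
-/

section Deletion

variable {α : Type*}

def deleteOne {N : ℕ} (X : Fin (N + 1) → α) (u : ℕ) : Fin N → α :=
  fun t => X ⟨if (t : ℕ) < u then t else t + 1, by split <;> omega⟩

/-- `deleteTwo X u v` removes the entries at positions `u < v`. Positions are natural numbers
so that the index arithmetic can be left to `omega`. -/
def deleteTwo {N : ℕ} (X : Fin (N + 2) → α) (u v : ℕ) : Fin N → α :=
  fun t => X ⟨if (t : ℕ) < u then t else if (t : ℕ) + 1 < v then t + 1 else t + 2,
    by split_ifs <;> omega⟩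

theorem comp_succAbove_eq_deleteOne {N : ℕ} (X : Fin (N + 1) → α) (a : Fin (N + 1)) :
    X ∘ a.succAbove = deleteOne X a := by
  funext t
  refine congrArg X (Fin.ext ?_)
  simp only [Fin.succAbove, Fin.lt_def, Fin.val_castSucc]
  split <;> simp [Fin.val_succ]

theorem deleteOne_deleteOne {N : ℕ} (X : Fin (N + 2) → α) {i j : ℕ} (h : i ≤ j) :
    deleteOne (deleteOne X i) j = deleteTwo X i (j + 1) := by
  funext t
  simp only [deleteOne, deleteTwo]
  congr 1
  simp only [Fin.mk.injEq]
  split_ifs <;> omega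

theorem deleteOne_cons_zero {N : ℕ} (B : α) (Z : Fin N → α) :
    deleteOne (Fin.cons B Z : Fin (N + 1) → α) 0 = Z := by
  funext t
  rfl

theorem deleteOne_cons_succ {N : ℕ} (B : α) (Z : Fin (N + 1) → α) (b : ℕ) :
    deleteOne (Fin.cons B Z : Fin (N + 2) → α) (b + 1) = Fin.cons B (deleteOne Z b) := by
  funext t
  induction t using Fin.cases with
  | zero => rfl
  | succ s =>
    simp only [deleteOne, Fin.val_succ, Fin.cons_succ, add_lt_add_iff_right]
    split_ifs <;> rfl

end Deletion

/-- Both sides run over the triples `(U < V, a)` of distinct indices in `Fin (N + 3)`: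
on the left the single index `a` is deleted first, on the right last. -/
theorem sum_deleteOne_deleteTwo {α R : Type*} [CommRing R] {N : ℕ} (X : Fin (N + 3) → α)
    (Φ : α → α → α → (Fin N → α) → R) :
    ∑ a : Fin (N + 3), ∑ u : Fin (N + 2), ∑ v : Fin (N + 2),
      (if (u : ℕ) < v then (-1 : R) ^ ((a : ℕ) + u + v) *
        Φ (X a) (deleteOne X a u) (deleteOne X a v) (deleteTwo (deleteOne X a) u v) else 0)
    = ∑ U : Fin (N + 3), ∑ V : Fin (N + 3),
      if (U : ℕ) < V then ∑ b : Fin (N + 1), (-1 : R) ^ ((U : ℕ) + V + b) *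
        Φ (deleteTwo X U V b) (X U) (X V) (deleteOne (deleteTwo X U V) b) else 0 := by
  classical
  calc _ = ∑ x ∈ univ.filter
          (fun x : Fin (N + 3) × Fin (N + 2) × Fin (N + 2) => (x.2.1 : ℕ) < x.2.2),
        (-1 : R) ^ ((x.1 : ℕ) + x.2.1 + x.2.2) * Φ (X x.1) (deleteOne X x.1 x.2.1)
          (deleteOne X x.1 x.2.2) (deleteTwo (deleteOne X x.1) x.2.1 x.2.2) := by
        simp only [sum_filter, Fintype.sum_prod_type]
    _ = ∑ y ∈ univ.filter
          (fun y : Fin (N + 3) × Fin (N + 3) × Fin (N + 1) => (y.1 : ℕ) < y.2.1),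
        (-1 : R) ^ ((y.1 : ℕ) + y.2.1 + y.2.2) * Φ (deleteTwo X y.1 y.2.1 y.2.2) (X y.1) (X y.2.1)
          (deleteOne (deleteTwo X y.1 y.2.1) y.2.2) := by
      refine sum_nbij'
        (fun x => (Fin.clamp (if (x.2.1 : ℕ) < x.1 then x.2.1 else x.2.1 + 1) _,
          Fin.clamp (if (x.2.2 : ℕ) < x.1 then x.2.2 else x.2.2 + 1) _,
          Fin.clamp (x.1 - (if (x.2.1 : ℕ) < x.1 then 1 else 0)
            - (if (x.2.2 : ℕ) < x.1 then 1 else 0)) _))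
        (fun y =>
          let a : ℕ := if (y.2.2 : ℕ) < y.1 then y.2.2
            else if (y.2.2 : ℕ) + 1 < y.2.1 then y.2.2 + 1 else y.2.2 + 2
          (Fin.clamp a _, Fin.clamp (if (y.1 : ℕ) < a then y.1 else y.1 - 1) _,
            Fin.clamp (if (y.2.1 : ℕ) < a then y.2.1 else y.2.1 - 1) _))
        ?_ ?_ ?_ ?_ ?_
      · rintro ⟨a, u, v⟩ h
        simp only [mem_filter, mem_univ, true_and, Fin.coe_clamp] at h ⊢
        split_ifs <;> omega
      · rintro ⟨U, V, b⟩ h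
        simp only [mem_filter, mem_univ, true_and, Fin.coe_clamp] at h ⊢
        split_ifs <;> omega
      · rintro ⟨a, u, v⟩ h
        simp only [mem_filter, mem_univ, true_and] at h
        simp only [Prod.mk.injEq, Fin.ext_iff, Fin.coe_clamp]
        refine ⟨?_, ?_, ?_⟩ <;> split_ifs <;> omega
      · rintro ⟨U, V, b⟩ h
        simp only [mem_filter, mem_univ, true_and] at h
        simp only [Prod.mk.injEq, Fin.ext_iff, Fin.coe_clamp]
        refine ⟨?_, ?_, ?_⟩ <;> split_ifs <;> omega
      · rintro ⟨a, u, v⟩ h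
        simp only [mem_filter, mem_univ, true_and] at h
        simp only [deleteOne, deleteTwo, Fin.coe_clamp]
        congr 1
        · rw [neg_one_pow_eq_pow_mod_two, neg_one_pow_eq_pow_mod_two (n := _ + _ + _)]
          congr 1
          split_ifs <;> omega
        congr 1; congr 1
        all_goals
          try funext t
          try (show X _ = X _; congr 1)
          simp only [Fin.ext_iff, Fin.coe_clamp]
          split_ifs <;> omega
    _ = _ := by simp only [sum_filter, Fintype.sum_prod_type, sum_ite_irrel, sum_const_zero]

section Forms

variable {K : Type*} [Field K] {g : Type*}

def wedge2 (μ : g → g → K) {N : ℕ} (ψ : (Fin N → g) → K) : (Fin (N + 2) → g) → K :=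
  fun X => ∑ u : Fin (N + 2), ∑ v : Fin (N + 2),
    if (u : ℕ) < v then (-1 : K) ^ ((u : ℕ) + v) * μ (X u) (X v) * ψ (deleteTwo X u v) else 0

theorem wedge2_zero {N : ℕ} (μ : g → g → K) : wedge2 μ (0 : (Fin N → g) → K) = 0 := by
  funext X
  simp [wedge2]

variable [AddCommGroup g] [Module K g]

variable (K) in
def wedge1ₗ (θ : Module.Dual K g) (n : ℕ) : ((Fin n → g) → K) →ₗ[K] (Fin (n + 1) → g) → K where
  toFun := wedge1 θ
  map_add' φ χ := by
    funext X
    simp only [wedge1, Pi.add_apply, mul_add, sum_add_distrib]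
  map_smul' r φ := by
    funext X
    simp only [wedge1, Pi.smul_apply, smul_eq_mul, RingHom.id_apply, mul_sum]
    exact sum_congr rfl fun i _ => by ring

theorem wedge1_add {n : ℕ} (θ : Module.Dual K g) (φ χ : (Fin n → g) → K) :
    wedge1 θ (φ + χ) = wedge1 θ φ + wedge1 θ χ :=
  map_add (wedge1ₗ K θ n) φ χ

theorem wedge1_smul {n : ℕ} (θ : Module.Dual K g) (r : K) (φ : (Fin n → g) → K) :
    wedge1 θ (r • φ) = r • wedge1 θ φ :=
  map_smul (wedge1ₗ K θ n) r φ

theorem wedge1_zero {n : ℕ} (θ : Module.Dual K g) : wedge1 θ (0 : (Fin n → g) → K) = 0 :=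
  map_zero (wedge1ₗ K θ n)

theorem wedge1_sum {n : ℕ} {ι : Type*} (s : Finset ι) (θ : Module.Dual K g)
    (φ : ι → (Fin n → g) → K) : wedge1 θ (∑ i ∈ s, φ i) = ∑ i ∈ s, wedge1 θ (φ i) :=
  map_sum (wedge1ₗ K θ n) φ s

theorem wedgeIter_zero (c : ℕ) (θ : Fin c → Module.Dual K g) {n : ℕ} :
    wedgeIter c θ (0 : (Fin n → g) → K) = 0 := by
  induction c with
  | zero => rfl
  | succ c ih => exact (congrArg (wedge1 (θ 0)) (ih _)).trans (wedge1_zero _)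

theorem wedge1_wedge2 {N : ℕ} (θ : Module.Dual K g) (μ : g → g → K) (ψ : (Fin N → g) → K) :
    wedge1 θ (wedge2 μ ψ) = wedge2 μ (wedge1 θ ψ) := by
  funext X
  simp only [wedge1, wedge2, comp_succAbove_eq_deleteOne]
  refine Eq.trans ?_ ((sum_deleteOne_deleteTwo X fun x y z Z => θ x * μ y z * ψ Z).trans ?_)
  · refine sum_congr rfl fun a _ => ?_
    rw [mul_sum]
    refine sum_congr rfl fun u _ => ?_
    rw [mul_sum]
    refine sum_congr rfl fun v _ => ?_
    split_ifs <;> ring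
  · refine sum_congr rfl fun U _ => sum_congr rfl fun V _ => ?_
    split_ifs
    · rw [mul_sum]
      exact sum_congr rfl fun b _ => by ring
    · rfl

variable (K g) in
/-- `N + (c + 1) + 1` and `N + 1 + (c + 1)` are not definitionally equal, so cochains have to
be transported between such arities. -/
def castArity {a b : ℕ} (h : a = b) : ((Fin a → g) → K) →ₗ[K] (Fin b → g) → K :=
  LinearMap.funLeft K K fun X => X ∘ Fin.cast h

theorem wedge1_castArity {a b : ℕ} (h : a = b) (θ : Module.Dual K g) (ψ : (Fin a → g) → K) :
    wedge1 θ (castArity K g h ψ) = castArity K g (congrArg (· + 1) h) (wedge1 θ ψ) := by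
  subst h
  rfl

end Forms

section ChevalleyEilenberg

variable {K : Type*} [Field K] {g : Type*} [LieRing g] [LieAlgebra K g]

theorem ceD0_zero (n : ℕ) : ceD0 n (0 : (Fin n → g) → K) = 0 := by
  cases n with
  | zero => rfl
  | succ n => funext X; simp [ceD0]

theorem ceD0_succ_apply {N : ℕ} (ψ : (Fin (N + 1) → g) → K) (X : Fin (N + 2) → g) :
    ceD0 (N + 1) ψ X = ∑ u : Fin (N + 2), ∑ v : Fin (N + 2),
      if (u : ℕ) < v then (-1 : K) ^ ((u : ℕ) + v) * ψ (Fin.cons ⁅X u, X v⁆ (deleteTwo X u v))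
      else 0 := by
  refine sum_congr rfl fun i _ => ?_
  conv_rhs => rw [Fin.sum_univ_succ]
  rw [if_neg (by simp), zero_add]
  refine sum_congr rfl fun j _ => ?_
  by_cases h : (i : ℕ) ≤ j
  · have hij : i.succAbove j = j.succ :=
      Fin.succAbove_of_le_castSucc i j (by rwa [Fin.le_def, Fin.val_castSucc])
    rw [if_pos h, if_pos (by simpa [Nat.lt_succ_iff] using h), hij, comp_succAbove_eq_deleteOne,
      comp_succAbove_eq_deleteOne, deleteOne_deleteOne X h, zsmul_eq_mul]
    push_cast
    rfl
  · rw [if_neg h, if_neg (by simpa [Nat.lt_succ_iff] using h)]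

theorem wedge1_ceD0_succ_apply {N : ℕ} (θ : Module.Dual K g) (ψ : (Fin (N + 1) → g) → K)
    (X : Fin (N + 3) → g) :
    wedge1 θ (ceD0 (N + 1) ψ) X = ∑ U : Fin (N + 3), ∑ V : Fin (N + 3),
      if (U : ℕ) < V then ∑ b : Fin (N + 1), (-1 : K) ^ ((U : ℕ) + V + b) *
        (θ (deleteTwo X U V b) * ψ (Fin.cons ⁅X U, X V⁆ (deleteOne (deleteTwo X U V) b)))
      else 0 := by
  rw [← sum_deleteOne_deleteTwo X fun x y z Z => θ x * ψ (Fin.cons ⁅y, z⁆ Z)]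
  simp only [wedge1, comp_succAbove_eq_deleteOne, ceD0_succ_apply, mul_sum]
  refine sum_congr rfl fun a _ => sum_congr rfl fun u _ => sum_congr rfl fun v _ => ?_
  split_ifs <;> ring

theorem ceD0_wedge1_succ_apply {N : ℕ} (θ : Module.Dual K g) (ψ : (Fin (N + 1) → g) → K)
    (X : Fin (N + 3) → g) :
    ceD0 (N + 2) (wedge1 θ ψ) X =
      wedge2 (fun x y => θ ⁅x, y⁆) ψ X - ∑ U : Fin (N + 3), ∑ V : Fin (N + 3),
      if (U : ℕ) < V then ∑ b : Fin (N + 1), (-1 : K) ^ ((U : ℕ) + V + b) *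
        (θ (deleteTwo X U V b) * ψ (Fin.cons ⁅X U, X V⁆ (deleteOne (deleteTwo X U V) b)))
      else 0 := by
  rw [ceD0_succ_apply, wedge2, ← sum_sub_distrib]
  refine sum_congr rfl fun U _ => ?_
  rw [← sum_sub_distrib]
  refine sum_congr rfl fun V _ => ?_
  split_ifs
  · rw [wedge1, Fin.sum_univ_succ]
    simp only [comp_succAbove_eq_deleteOne, Fin.val_zero, Fin.val_succ, Fin.cons_zero,
      Fin.cons_succ, pow_zero, one_mul, deleteOne_cons_zero, deleteOne_cons_succ, mul_add,
      mul_sum, pow_succ]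
    rw [sub_eq_add_neg, ← Finset.sum_neg_distrib]
    congr 1
    · ring
    · refine sum_congr rfl fun b _ => ?_
      ring
  · rw [sub_zero]

/-- The Leibniz rule `d(θ ∧ ψ) = dθ ∧ ψ - θ ∧ dψ`: here `dθ(x, y) = -θ⁅x, y⁆` and `wedge2` is
minus the usual wedge product with a 2-form, so `wedge2 (fun x y => θ ⁅x, y⁆) ψ = dθ ∧ ψ`. -/
theorem wedge1_ceD0 {N : ℕ} (θ : Module.Dual K g) (ψ : (Fin N → g) → K) :
    wedge1 θ (ceD0 N ψ) = wedge2 (fun x y => θ ⁅x, y⁆) ψ - ceD0 (N + 1) (wedge1 θ ψ) := by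
  funext X
  cases N with
  | zero =>
    rw [show ceD0 0 ψ = 0 from rfl, wedge1_zero, Pi.zero_apply, Pi.sub_apply, eq_comm, sub_eq_zero,
      ceD0_succ_apply]
    refine sum_congr rfl fun u _ => sum_congr rfl fun v _ => ?_
    split_ifs
    · simp only [wedge1, Fin.sum_univ_succ, Fin.sum_univ_zero, add_zero, Fin.val_zero, pow_zero,
        one_mul, Fin.cons_zero]
      rw [mul_assoc]
      exact congrArg _ (congrArg _ (congrArg ψ (Subsingleton.elim _ _)))
    · rfl
  | succ N =>
    rw [Pi.sub_apply, wedge1_ceD0_succ_apply, ceD0_wedge1_succ_apply, sub_sub_cancel]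

theorem wedgeIter_succ_ceD0 (c : ℕ) {N : ℕ} (ψ : (Fin N → g) → K)
    (θ : Fin (c + 1) → Module.Dual K g) :
    wedgeIter (c + 1) θ (ceD0 N ψ) =
      castArity K g (by omega) ((-1 : K) ^ (c + 1) • ceD0 (N + (c + 1)) (wedgeIter (c + 1) θ ψ)) +
      castArity K g (by omega) (∑ i : Fin (c + 1), (-1 : K) ^ (c - i) •
        wedge2 (fun x y => θ i ⁅x, y⁆) (wedgeIter c (θ ∘ i.succAbove) ψ)) := by
  induction c with
  | zero =>
    -- for `c = 0` both casts are definitionally the identity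
    show wedge1 (θ 0) (ceD0 N ψ) = (-1 : K) ^ (0 + 1) • ceD0 (N + (0 + 1)) (wedge1 (θ 0) ψ) +
      ∑ i : Fin 1, (-1 : K) ^ (0 - (i : ℕ)) • wedge2 (fun x y => θ i ⁅x, y⁆) ψ
    rw [wedge1_ceD0, Fin.sum_univ_one]
    simp only [zero_add, pow_one, Fin.val_zero, Nat.sub_zero, pow_zero, one_smul, neg_smul]
    exact sub_eq_neg_add _ _
  | succ c ih =>
    have hθ : ∀ i : Fin (c + 1), wedgeIter (c + 1) (θ ∘ i.succ.succAbove) ψ =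
        wedge1 (θ 0) (wedgeIter c ((θ ∘ Fin.succ) ∘ i.succAbove) ψ) := by
      intro i
      simp only [wedgeIter, Function.comp_def, Fin.succ_succAbove_zero, Fin.succ_succAbove_succ]
    rw [show wedgeIter (c + 2) θ (ceD0 N ψ) =
        wedge1 (θ 0) (wedgeIter (c + 1) (θ ∘ Fin.succ) (ceD0 N ψ)) from rfl,
      ih, wedge1_add, wedge1_castArity, wedge1_castArity, wedge1_smul, wedge1_ceD0, wedge1_sum]
    simp only [wedge1_smul, wedge1_wedge2, Fin.sum_univ_succ (n := c + 1), Fin.succAbove_zero, hθ,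
      Fin.val_zero, Nat.sub_zero, Fin.val_succ, Nat.add_sub_add_right, pow_succ _ (c + 1)]
    have hD : ceD0 (N + (c + 1) + 1) (wedge1 (θ 0) (wedgeIter (c + 1) (θ ∘ Fin.succ) ψ)) =
      ceD0 (N + (c + 1 + 1)) (wedgeIter (c + 1 + 1) θ ψ) := rfl
    funext X
    simp only [castArity, LinearMap.funLeft_apply, Pi.add_apply, Pi.sub_apply, Pi.smul_apply,
      smul_eq_mul, Finset.sum_apply, Function.comp_apply, hD]
    ring

theorem wedgeIter_succ_ceD0_eq_zero {c N : ℕ} {ψ : (Fin N → g) → K}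
    {θ : Fin (c + 1) → Module.Dual K g}
    (hψ : ∀ i : Fin (c + 1), wedgeIter c (θ ∘ i.succAbove) ψ = 0) :
    wedgeIter (c + 1) θ (ceD0 N ψ) = 0 := by
  have hθψ : wedgeIter (c + 1) θ ψ = 0 := by
    show wedge1 (θ 0) (wedgeIter c (θ ∘ Fin.succ) ψ) = 0
    rw [← Fin.succAbove_zero, hψ 0, wedge1_zero]
  simp only [wedgeIter_succ_ceD0, hθψ, hψ, ceD0_zero, wedge2_zero, smul_zero, sum_const_zero,
    map_zero, add_zero]

end ChevalleyEilenberg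

theorem wFilt_d_stable_general
    (K : Type*) [Field K]
    (g : Type*) [LieRing g] [LieAlgebra K g]
    (W : Submodule K (Module.Dual K g)) (p : ℤ) (n : ℕ)
    (ω : AlternatingMap K g K (Fin n)) (hω : ⇑ω ∈ wFilt W p n) :
    ceD0 n ⇑ω ∈ wFilt W p (n + 1) := by
  unfold wFilt at hω ⊢
  split_ifs at hω with hneg
  · rw [Set.mem_singleton_iff.mp hω, ceD0_zero]
    split_ifs
    · rfl
    · exact fun m _ θ _ => wedgeIter_zero m θ
  · rw [if_neg (by push_cast; omega)]
    rintro (_ | m) hm θ hθ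
    · omega
    · exact wedgeIter_succ_ceD0_eq_zero fun i =>
        hω m (by push_cast at hm ⊢; omega) _ fun j => hθ _

/-- The wedge-annihilation filtration is stable under the Chevalley–Eilenberg
differential: `d(F̃^pC^n(g)) ⊆ F̃^pC^{n+1}(g)`. -/
theorem wFilt_d_stable
    (K : Type*) [Field K] [CharZero K]
    (g : Type*) [LieRing g] [LieAlgebra K g] [FiniteDimensional K g]
    (W : Submodule K (Module.Dual K g)) (p : ℤ) (n : ℕ)
    (ω : AlternatingMap K g K (Fin n)) (hω : ⇑ω ∈ wFilt W p n) :
    ceD0 n ⇑ω ∈ wFilt W p (n + 1) :=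
  wFilt_d_stable_general K g W p n ω hω
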